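/- Let M be a free abelian group of finite rank, V and W subgroups of M, and φ : V → W a group isomorphism. For an element x of M, the following are equivalent: (i) there exists a positive integer p such that for every k ∈ ℕ the k-th iterate of φ is defined at p·x (i.e. p·x ∈ V_k where V_k = { v ∈ V : φ^j(v) ∈ V for all 0 ≤ j < k }); (ii) there exists a ℚ-subspace D_x of D_φ containing the image of x, with φ̃(D_x) = D_x, such that the minimal polynomial of the restriction of φ̃ to D_x is a monic polynomial with integer coefficients. -/

import Mathlib

/-!
Setting: `M = ℤ^n` is a free abelian group of finite rank, `V, W` are subgroups of `M`,
and `φ : V ≃+ W` is a group isomorphism.  Inside `M ⊗ ℚ = ℚ^n`, a subgroup `U` of `M`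
is identified with the `ℚ`-subspace `U ⊗ ℚ` spanned by its image, and `φ_ℚ` denotes the
unique `ℚ`-linear extension of `φ` to `V ⊗ ℚ`.
-/

/-- The canonical embedding of `ℤ^n` into `ℚ^n` (i.e. `M → M ⊗ ℚ`). -/
def embQ (n : ℕ) (x : Fin n → ℤ) : Fin n → ℚ := fun i => (x i : ℚ)

/-- `U ⊗ ℚ`, the `ℚ`-subspace of `ℚ^n` spanned by the image of a subgroup `U` of `ℤ^n`. -/
def qSpan (n : ℕ) (U : AddSubgroup (Fin n → ℤ)) : Submodule ℚ (Fin n → ℚ) :=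
  Submodule.span ℚ (embQ n '' (U : Set (Fin n → ℤ)))

/-- `RelQ V W φ x y` expresses that `x ∈ V ⊗ ℚ` and `φ_ℚ (x) = y`, where `φ_ℚ` is the
unique `ℚ`-linear extension of `φ : V ≃+ W`: there is a nonzero integer `p` clearing the
denominators of `x`, with `p • x ∈ V` and `φ (p • x) = p • y`. -/
def RelQ {n : ℕ} (V W : AddSubgroup (Fin n → ℤ)) (φ : V ≃+ W)
    (x y : Fin n → ℚ) : Prop :=
  ∃ p : ℤ, p ≠ 0 ∧ ∃ v : V, embQ n (v : Fin n → ℤ) = p • x ∧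
    embQ n ((φ v : W) : Fin n → ℤ) = p • y

/-- `D_φ`: the set of `x ∈ (V ∩ W) ⊗ ℚ` admitting a full backward orbit
`(x_k)_{k ≥ 0}` under `φ_ℚ` inside `(V ∩ W) ⊗ ℚ`, i.e. `x_0 = x` and
`φ_ℚ (x_{k+1}) = x_k` for all `k`. -/
def DSet {n : ℕ} (V W : AddSubgroup (Fin n → ℤ)) (φ : V ≃+ W) : Set (Fin n → ℚ) :=
  {x | ∃ xs : ℕ → (Fin n → ℚ), xs 0 = x ∧ (∀ k, xs k ∈ qSpan n (V ⊓ W)) ∧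
      ∀ k, RelQ V W φ (xs (k + 1)) (xs k)}


/-- `IntRel V W φ v w`: `v ∈ V` and `φ (v) = w` (as elements of `M = ℤ^n`). -/
def IntRel {n : ℕ} (V W : AddSubgroup (Fin n → ℤ)) (φ : V ≃+ W)
    (v w : Fin n → ℤ) : Prop :=
  ∃ hv : v ∈ V, ((φ ⟨v, hv⟩ : W) : Fin n → ℤ) = w

/-- `IntRelIter V W φ k v w`: the `k`-th iterate of `φ` is defined at `v` (i.e. `v ∈ V_k`,
that is `φ^j (v) ∈ V` for all `0 ≤ j < k`) and `φ^k (v) = w`.  In particular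
`V_k = {v | ∃ w, IntRelIter V W φ k v w}` and `W_k = φ^k (V_k) = {w | ∃ v, IntRelIter V W φ k v w}`. -/
def IntRelIter {n : ℕ} (V W : AddSubgroup (Fin n → ℤ)) (φ : V ≃+ W) :
    ℕ → (Fin n → ℤ) → (Fin n → ℤ) → Prop
  | 0, v, w => v = w
  | (k + 1), v, w => ∃ u, IntRel V W φ v u ∧ IntRelIter V W φ k u w

/-!
If `p • x` has an infinite forward orbit `v₀ = p • x, vₖ₊₁ = φ vₖ`, the `ℚ`-span `D` of the orbit is
finite dimensional and `φ_ℚ` maps it injectively, hence bijectively, onto itself; so `D` is spanned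
by `v₁, v₂, …`, which lie in `V ∩ W`, and every point of `D` has a backward orbit in `D`. The
`ℤ`-span of the orbit is a finitely generated lattice spanning `D` and stable under `φ̃`, so `φ̃` is
integral over `ℤ`, and since `ℤ` is integrally closed its minimal polynomial over `ℚ` has integer
coefficients.

Conversely, if `φ̃` is integral over `ℤ`, the `ℤ`-span of the orbit of `x` under `φ̃` is finitely
generated, so a single `p > 0` clears all its denominators into `V ∩ W`; the integer points
`p • φ̃ᵏ x` then form a forward orbit of `p • x` under `φ`.
-/

open Polynomial Set Submodule

section ClearDenominators

variable {A : Type*} [AddCommGroup A] [Module ℚ A]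

lemma exists_pos_zsmul_mem_of_mem_span_rat {G : Submodule ℤ A} {y : A}
    (hy : y ∈ span ℚ (G : Set A)) : ∃ N : ℤ, 0 < N ∧ N • y ∈ G := by
  induction hy using span_induction with
  | mem z hz => exact ⟨1, one_pos, by simpa⟩
  | zero => exact ⟨1, one_pos, by simp⟩
  | add y z _ _ hy hz =>
    obtain ⟨N, hN, hNy⟩ := hy
    obtain ⟨M, hM, hMz⟩ := hz
    refine ⟨N * M, mul_pos hN hM, ?_⟩
    rw [smul_add, mul_comm, mul_smul, mul_comm, mul_smul]
    exact G.add_mem (G.smul_mem M hNy) (G.smul_mem N hMz)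
  | smul q z _ hz =>
    obtain ⟨N, hN, hNz⟩ := hz
    refine ⟨N * q.den, mul_pos hN (by exact_mod_cast q.den_pos), ?_⟩
    have key : (N * q.den : ℤ) • (q • z) = q.num • (N • z) := by
      simp only [← Int.cast_smul_eq_zsmul ℚ, smul_smul]
      congr 1
      push_cast
      rw [mul_assoc, mul_comm (q.den : ℚ), Rat.mul_den_eq_num, mul_comm]
    rw [key]
    exact G.smul_mem _ hNz

lemma mem_span_rat_of_zsmul_mem {G : Submodule ℤ A} {N : ℤ} (hN : N ≠ 0) {y : A}
    (h : N • y ∈ G) : y ∈ span ℚ (G : Set A) := by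
  have hy : y = (N : ℚ)⁻¹ • (N • y) := by
    rw [← Int.cast_smul_eq_zsmul ℚ, inv_smul_smul₀ (by exact_mod_cast hN)]
  rw [hy]
  exact smul_mem _ _ (subset_span h)

lemma exists_pos_zsmul_mem_of_fg {Λ G : Submodule ℤ A} (hΛ : Λ.FG)
    (hle : Λ ≤ (span ℚ (G : Set A)).restrictScalars ℤ) : ∃ N : ℤ, 0 < N ∧ ∀ w ∈ Λ, N • w ∈ G := by
  induction Λ, hΛ using fg_induction with
  | singleton x =>
    obtain ⟨N, hN, hNx⟩ := exists_pos_zsmul_mem_of_mem_span_rat (hle (mem_span_singleton_self x))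
    refine ⟨N, hN, fun w hw => ?_⟩
    obtain ⟨m, rfl⟩ := mem_span_singleton.mp hw
    rw [smul_comm]
    exact G.smul_mem m hNx
  | sup Λ₁ Λ₂ _ _ ih₁ ih₂ =>
    obtain ⟨N₁, hN₁, h₁⟩ := ih₁ (le_sup_left.trans hle)
    obtain ⟨N₂, hN₂, h₂⟩ := ih₂ (le_sup_right.trans hle)
    refine ⟨N₁ * N₂, mul_pos hN₁ hN₂, fun w hw => ?_⟩
    obtain ⟨a, ha, b, hb, rfl⟩ := mem_sup.mp hw
    rw [smul_add, mul_comm, mul_smul, mul_comm, mul_smul]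
    exact G.add_mem (G.smul_mem N₂ (h₁ a ha)) (G.smul_mem N₁ (h₂ b hb))

end ClearDenominators

lemma isIntegral_iff_exists_monic_map_eq_minpoly {R K B : Type*} [CommRing R] [IsDomain R]
    [IsIntegrallyClosed R] [Field K] [Algebra R K] [IsFractionRing R K] [Ring B] [Algebra R B]
    [Algebra K B] [IsScalarTower R K B] {x : B} :
    IsIntegral R x ↔ ∃ P : R[X], P.Monic ∧ P.map (algebraMap R K) = minpoly K x := by
  refine ⟨fun hx => ?_, fun ⟨P, hP, hPx⟩ => ⟨P, hP, ?_⟩⟩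
  · have hmonic : (minpoly K x).Monic := minpoly.monic hx.tower_top
    obtain ⟨Q, hQ, hQx⟩ := hx
    have hdvd : minpoly K x ∣ Q.map (algebraMap R K) :=
      minpoly.dvd K x (by rwa [aeval_map_algebraMap, aeval_def])
    obtain ⟨P, hP⟩ := IsIntegrallyClosed.eq_map_mul_C_of_dvd K hQ hdvd
    rw [hmonic.leadingCoeff, C_1, mul_one] at hP
    exact ⟨P, monic_of_injective (IsFractionRing.injective R K) (hP ▸ hmonic), hP⟩
  · rw [← aeval_def, ← aeval_map_algebraMap K, hPx, minpoly.aeval]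

lemma isIntegral_of_fg_of_forall_mem {R K M : Type*} [CommRing R] [Field K] [Algebra R K]
    [AddCommGroup M] [Module K M] [Module R M] [IsScalarTower R K M] (f : Module.End K M)
    {Λ : Submodule R M} (hfg : Λ.FG) (hstab : ∀ w ∈ Λ, f w ∈ Λ)
    (hspan : span K (Λ : Set M) = ⊤) : IsIntegral R f := by
  have : Module.Finite R Λ := Module.Finite.iff_fg.mpr hfg
  set r : Module.End R Λ := (f.restrictScalars R).restrict hstab
  obtain ⟨Q, hQ, hQr⟩ := LinearMap.exists_monic_and_aeval_eq_zero R r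
  have hpow : ∀ (k : ℕ) (w : Λ), ((r ^ k) w : M) = (f ^ k) w := by
    intro k
    induction k with
    | zero => exact fun _ => rfl
    | succ k ih => exact fun w => by rw [pow_succ, Module.End.mul_apply, ih, pow_succ]; rfl
  refine ⟨Q, hQ, ?_⟩
  rw [← aeval_def]
  refine LinearMap.ext_on hspan fun w hw => ?_
  have h := congrArg (fun g : Module.End R Λ => (g ⟨w, hw⟩ : M)) hQr
  simp only [aeval_eq_sum_range, LinearMap.sum_apply, LinearMap.smul_apply, Submodule.coe_sum,
    Submodule.coe_smul, hpow, LinearMap.zero_apply, ZeroMemClass.coe_zero] at h ⊢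
  rw [← h]

lemma isIntegral_of_fg_span_orbit {R K M : Type*} [CommRing R] [Field K] [Algebra R K]
    [AddCommGroup M] [Module K M] [Module R M] [IsScalarTower R K M] {f : Module.End K M}
    {y : ℕ → M} (hy : ∀ k, f (y k) = y (k + 1)) (hspan : span K (range y) = ⊤)
    (hfg : (span R (range y)).FG) : IsIntegral R f := by
  refine isIntegral_of_fg_of_forall_mem f hfg (fun w hw => ?_) (by rw [span_span_of_tower, hspan])
  refine (span_le (p := (span R (range y)).comap (f.restrictScalars R))).mpr ?_ hw
  refine range_subset_iff.mpr fun k => ?_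
  change f (y k) ∈ span R (range y)
  exact hy k ▸ subset_span ⟨k + 1, rfl⟩

lemma fg_span_range_pow_smul {R A M : Type*} [CommRing R] [Ring A] [Algebra R A] [AddCommGroup M]
    [Module A M] [Module R M] [IsScalarTower R A M] {a : A} (ha : IsIntegral R a) (z : M) :
    (span R (range fun k : ℕ => a ^ k • z)).FG := by
  classical
  obtain ⟨Q, hQ, hQa⟩ := id ha
  have hpow :
      span R (range fun k : ℕ => a ^ k) = Subalgebra.toSubmodule (Algebra.adjoin R {a}) := by
    refine le_antisymm (span_le.mpr ?_) ?_
    · rintro _ ⟨k, rfl⟩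
      exact (Algebra.adjoin R {a}).pow_mem (Algebra.subset_adjoin rfl) k
    · rw [← span_range_natDegree_eq_adjoin hQ (by rwa [aeval_def])]
      exact span_mono (by simp [Set.image_subset_iff])
  have hmap : span R (range fun k : ℕ => a ^ k • z) =
      (span R (range fun k : ℕ => a ^ k)).map
        ((LinearMap.toSpanSingleton A M z).restrictScalars R) := by
    rw [map_span, ← range_comp]
    rfl
  rw [hmap, hpow]
  exact ha.fg_adjoin_singleton.map _

lemma exists_linearEquiv_of_span_orbit_graph {K M : Type*} [Field K] [AddCommGroup M] [Module K M]
    (y : ℕ → M) [FiniteDimensional K (span K (range y))]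
    (hfun : ∀ b, ((0 : M), b) ∈ span K (range fun k => (y k, y (k + 1))) → b = 0)
    (hinj : ∀ a, (a, (0 : M)) ∈ span K (range fun k => (y k, y (k + 1))) → a = 0) :
    ∃ e : span K (range y) ≃ₗ[K] span K (range y),
      ∀ z : span K (range y), ((z : M), (e z : M)) ∈ span K (range fun k => (y k, y (k + 1))) := by
  set E := span K (range fun k => (y k, y (k + 1)))
  set D := span K (range y)
  have hfst : E.map (LinearMap.fst K M M) = D := by
    rw [map_span, ← range_comp]
    rfl
  have hsnd : E.map (LinearMap.snd K M M) ≤ D := by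
    rw [map_span, ← range_comp]
    exact span_mono (range_subset_iff.mpr fun k => ⟨k + 1, rfl⟩)
  let π₁ : E →ₗ[K] D := ((LinearMap.fst K M M).comp E.subtype).codRestrict D
    fun w => hfst ▸ mem_map_of_mem w.2
  let π₂ : E →ₗ[K] D := ((LinearMap.snd K M M).comp E.subtype).codRestrict D
    fun w => hsnd (mem_map_of_mem w.2)
  have hπ₁ : Function.Bijective π₁ := by
    refine ⟨(injective_iff_map_eq_zero π₁).mpr fun w hw => ?_, fun z => ?_⟩
    · have h1 : (w : M × M).1 = 0 := congrArg Subtype.val hw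
      have h2 : (w : M × M).2 = 0 := hfun _ (h1 ▸ w.2)
      exact Subtype.ext (Prod.ext h1 h2)
    · obtain ⟨w, hw, hwz⟩ := mem_map.mp (hfst.symm ▸ z.2 : (z : M) ∈ E.map (LinearMap.fst K M M))
      exact ⟨⟨w, hw⟩, Subtype.ext hwz⟩
  have hπ₂ : Function.Injective π₂ := by
    refine (injective_iff_map_eq_zero π₂).mpr fun w hw => ?_
    have h2 : (w : M × M).2 = 0 := congrArg Subtype.val hw
    have h1 : (w : M × M).1 = 0 := hinj _ (h2 ▸ w.2)
    exact Subtype.ext (Prod.ext h1 h2)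
  let π₁e := LinearEquiv.ofBijective π₁ hπ₁
  refine ⟨LinearEquiv.ofInjectiveEndo (π₂ ∘ₗ π₁e.symm.toLinearMap)
    (hπ₂.comp π₁e.symm.injective), fun z => ?_⟩
  have hz : ((π₁e.symm z : E) : M × M).1 = z := congrArg Subtype.val (π₁e.apply_symm_apply z)
  have hpair : ((z : M), ((π₂ (π₁e.symm z) : D) : M)) = (π₁e.symm z : M × M) :=
    Prod.ext hz.symm rfl
  exact hpair ▸ (π₁e.symm z).2

variable {n : ℕ}

def embQHom (n : ℕ) : (Fin n → ℤ) →+ (Fin n → ℚ) := (Int.castAddHom ℚ).compLeft (Fin n)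

lemma embQ_injective : Function.Injective (embQ n) := fun a b h =>
  funext fun i => by simpa [embQ] using congrFun h i

lemma embQ_zero : embQ n 0 = 0 := map_zero (embQHom n)

lemma embQ_zsmul (m : ℤ) (a : Fin n → ℤ) : embQ n (m • a) = m • embQ n a :=
  map_zsmul (embQHom n) m a

lemma qSpan_eq_span_map (U : AddSubgroup (Fin n → ℤ)) :
    qSpan n U = span ℚ (U.toIntSubmodule.map (embQHom n).toIntLinearMap : Set (Fin n → ℚ)) := by
  rw [qSpan, map_coe]
  rfl

lemma fg_span_range_embQ {ι : Type*} (v : ι → Fin n → ℤ) :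
    (span ℤ (range fun i => embQ n (v i))).FG := by
  refine FG.of_le ((Module.Finite.fg_top).map (embQHom n).toIntLinearMap) ?_
  rw [Submodule.map_top]
  exact span_le.mpr (range_subset_iff.mpr fun i => ⟨v i, rfl⟩)

section

variable {V W : AddSubgroup (Fin n → ℤ)} {φ : V ≃+ W}

lemma embQ_apply_eq_of_relQ {x y : Fin n → ℚ} (h : RelQ V W φ x y) (a : V) {m : ℤ}
    (ha : embQ n a = m • x) : embQ n (φ a) = m • y := by
  obtain ⟨p, hp, v, hv, hφv⟩ := h
  have hav : p • a = m • v :=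
    Subtype.ext (embQ_injective (by
      rw [AddSubgroup.coe_zsmul, AddSubgroup.coe_zsmul, embQ_zsmul, embQ_zsmul, ha, hv, smul_comm]))
  refine smul_right_injective _ hp ?_
  dsimp only
  rw [← embQ_zsmul, ← AddSubgroup.coe_zsmul, ← map_zsmul, hav, map_zsmul, AddSubgroup.coe_zsmul,
    embQ_zsmul, hφv, smul_comm]

lemma relQ_right_unique {x y y' : Fin n → ℚ} (h : RelQ V W φ x y) (h' : RelQ V W φ x y') :
    y = y' := by
  obtain ⟨p, hp, v, hv, hφv⟩ := h
  exact smul_right_injective _ hp (hφv.symm.trans (embQ_apply_eq_of_relQ h' v hv))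

lemma eq_zero_of_relQ_zero_right {x : Fin n → ℚ} (h : RelQ V W φ x 0) : x = 0 := by
  obtain ⟨p, hp, v, hv, hφv⟩ := h
  have hv0 : v = 0 :=
    φ.injective (Subtype.ext (embQ_injective (by rw [hφv, smul_zero, map_zero]; rfl)))
  refine smul_right_injective _ hp ?_
  simp only [← hv, hv0, smul_zero]
  rfl

lemma relQ_embQ_of_intRel {a b : Fin n → ℤ} (h : IntRel V W φ a b) :
    RelQ V W φ (embQ n a) (embQ n b) := by
  obtain ⟨ha, rfl⟩ := h
  exact ⟨1, one_ne_zero, ⟨a, ha⟩, (one_smul _ _).symm, (one_smul _ _).symm⟩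

lemma relQ_zero : RelQ V W φ 0 0 := by
  refine ⟨1, one_ne_zero, 0, ?_, ?_⟩ <;> simp [embQ_zero]

lemma eq_zero_of_relQ_zero_left {y : Fin n → ℚ} (h : RelQ V W φ 0 y) : y = 0 :=
  relQ_right_unique h relQ_zero

lemma intRel_of_relQ {x y : Fin n → ℚ} (h : RelQ V W φ x y) {a b : Fin n → ℤ} (ha : a ∈ V)
    {m : ℤ} (hax : embQ n a = m • x) (hby : embQ n b = m • y) : IntRel V W φ a b :=
  ⟨ha, embQ_injective ((embQ_apply_eq_of_relQ h ⟨a, ha⟩ hax).trans hby.symm)⟩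

variable (V W φ) in
def graphQ : Submodule ℚ ((Fin n → ℚ) × (Fin n → ℚ)) :=
  span ℚ (LinearMap.range ((((embQHom n).comp V.subtype).prod
    ((embQHom n).comp (W.subtype.comp φ.toAddMonoidHom))).toIntLinearMap) : Set _)

lemma mem_graphQ {z : (Fin n → ℚ) × (Fin n → ℚ)} : z ∈ graphQ V W φ ↔ RelQ V W φ z.1 z.2 := by
  constructor
  · intro h
    obtain ⟨N, hN, v, hv⟩ := exists_pos_zsmul_mem_of_mem_span_rat h
    exact ⟨N, hN.ne', v, congrArg Prod.fst hv, congrArg Prod.snd hv⟩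
  · rintro ⟨p, hp, v, h₁, h₂⟩
    exact mem_span_rat_of_zsmul_mem hp ⟨v, Prod.ext h₁ h₂⟩

lemma intRel_right_unique {a b b' : Fin n → ℤ} (h : IntRel V W φ a b) (h' : IntRel V W φ a b') :
    b = b' := by
  obtain ⟨_, rfl⟩ := h
  obtain ⟨_, rfl⟩ := h'
  rfl

lemma intRelIter_right_unique {k : ℕ} {a b b' : Fin n → ℤ} (h : IntRelIter V W φ k a b)
    (h' : IntRelIter V W φ k a b') : b = b' := by
  induction k generalizing a with
  | zero => exact h.symm.trans h'
  | succ k ih =>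
    obtain ⟨u, hu, hk⟩ := h
    obtain ⟨u', hu', hk'⟩ := h'
    obtain rfl := intRel_right_unique hu hu'
    exact ih hk hk'

lemma exists_intRel_of_intRelIter_succ {k : ℕ} {a b : Fin n → ℤ}
    (h : IntRelIter V W φ (k + 1) a b) : ∃ u, IntRelIter V W φ k a u ∧ IntRel V W φ u b := by
  induction k generalizing a with
  | zero =>
    obtain ⟨u, hu, rfl⟩ := h
    exact ⟨a, rfl, hu⟩
  | succ k ih =>
    obtain ⟨u, hu, hk⟩ := h
    obtain ⟨u', hk', hu'⟩ := ih hk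
    exact ⟨u', ⟨u, hu, hk'⟩, hu'⟩

lemma intRelIter_of_orbit {v : ℕ → Fin n → ℤ} (hv : ∀ k, IntRel V W φ (v k) (v (k + 1)))
    (k : ℕ) : IntRelIter V W φ k (v 0) (v k) := by
  induction k generalizing v with
  | zero => rfl
  | succ k ih => exact ⟨v 1, hv 0, ih fun j => hv (j + 1)⟩

lemma forall_exists_intRelIter_iff {a : Fin n → ℤ} :
    (∀ k, ∃ w, IntRelIter V W φ k a w) ↔
      ∃ v : ℕ → Fin n → ℤ, v 0 = a ∧ ∀ k, IntRel V W φ (v k) (v (k + 1)) := by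
  constructor
  · intro h
    choose v hv using h
    refine ⟨v, (hv 0).symm, fun k => ?_⟩
    obtain ⟨u, hu, huv⟩ := exists_intRel_of_intRelIter_succ (hv (k + 1))
    rwa [intRelIter_right_unique hu (hv k)] at huv
  · rintro ⟨v, rfl, hv⟩ k
    exact ⟨v k, intRelIter_of_orbit hv k⟩

lemma dSet_subset_qSpan : DSet V W φ ⊆ qSpan n (V ⊓ W) := by
  rintro x ⟨xs, rfl, hxs, -⟩
  exact hxs 0

lemma subset_dSet_of_linearEquiv {D : Submodule ℚ (Fin n → ℚ)} (e : D ≃ₗ[ℚ] D)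
    (hD : D ≤ qSpan n (V ⊓ W)) (hrel : ∀ z : D, RelQ V W φ z (e z)) :
    (D : Set (Fin n → ℚ)) ⊆ DSet V W φ := by
  intro x hx
  refine ⟨fun k => (e.symm^[k] ⟨x, hx⟩ : D), rfl, fun k => hD (Subtype.prop _), fun k => ?_⟩
  simpa only [Function.iterate_succ_apply', LinearEquiv.apply_symm_apply] using
    hrel (e.symm^[k + 1] ⟨x, hx⟩)

lemma exists_integral_subspace_of_orbit {x : Fin n → ℤ} {p : ℤ} (hp : p ≠ 0)
    {v : ℕ → Fin n → ℤ} (hv0 : v 0 = p • x) (hv : ∀ k, IntRel V W φ (v k) (v (k + 1))) :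
    ∃ (D : Submodule ℚ (Fin n → ℚ)) (e : D ≃ₗ[ℚ] D),
      (D : Set (Fin n → ℚ)) ⊆ DSet V W φ ∧ embQ n x ∈ D ∧
      (∀ z : D, RelQ V W φ z (e z)) ∧ IsIntegral ℤ e.toLinearMap := by
  set y : ℕ → Fin n → ℚ := fun k => embQ n (v k)
  set D := span ℚ (range y)
  set E := span ℚ (range fun k => (y k, y (k + 1)))
  have hEgraph : E ≤ graphQ V W φ :=
    span_le.mpr (range_subset_iff.mpr fun k => mem_graphQ.mpr (relQ_embQ_of_intRel (hv k)))
  obtain ⟨e, he⟩ := exists_linearEquiv_of_span_orbit_graph y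
    (fun _ hb => eq_zero_of_relQ_zero_left (mem_graphQ.mp (hEgraph hb)))
    (fun _ ha => eq_zero_of_relQ_zero_right (mem_graphQ.mp (hEgraph ha)))
  have hrel : ∀ z : D, RelQ V W φ z (e z) := fun z => mem_graphQ.mp (hEgraph (he z))
  set y' : ℕ → D := fun k => ⟨y k, subset_span ⟨k, rfl⟩⟩
  have hey : ∀ k, e (y' k) = y' (k + 1) := fun k =>
    Subtype.ext (relQ_right_unique (hrel (y' k)) (relQ_embQ_of_intRel (hv k)))
  -- `y 0` need not lie in `W`, but every `z ∈ D` is `e (e⁻¹ z)`, a combination of `y 1, y 2, …`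
  have hDq : D ≤ qSpan n (V ⊓ W) := by
    intro z hz
    have hzE : (z : Fin n → ℚ) ∈ E.map (LinearMap.snd ℚ _ _) :=
      ⟨_, by simpa using he (e.symm ⟨z, hz⟩), rfl⟩
    rw [map_span, ← range_comp] at hzE
    refine span_le.mpr (range_subset_iff.mpr fun k => subset_span ?_) hzE
    obtain ⟨hvV, hφv⟩ := hv k
    exact ⟨v (k + 1), ⟨(hv (k + 1)).1, hφv ▸ (φ ⟨v k, hvV⟩).2⟩, rfl⟩
  have hxD : embQ n x ∈ D := by
    have hy0 : y 0 = (p : ℚ) • embQ n x := by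
      simp only [y, hv0, embQ_zsmul, Int.cast_smul_eq_zsmul]
    rw [← inv_smul_smul₀ (Int.cast_ne_zero.mpr hp : (p : ℚ) ≠ 0) (embQ n x), ← hy0]
    exact smul_mem _ _ (subset_span ⟨0, rfl⟩)
  refine ⟨D, e, subset_dSet_of_linearEquiv e hDq hrel, hxD, hrel,
    isIntegral_of_fg_span_orbit (f := e.toLinearMap) hey ?_ ?_⟩
  · apply map_injective_of_injective D.injective_subtype
    rw [map_span, ← range_comp, map_subtype_top]
    rfl
  · refine fg_of_fg_map_injective (D.subtype.restrictScalars ℤ) Subtype.val_injective ?_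
    rw [map_span, ← range_comp]
    exact fg_span_range_embQ v

lemma exists_orbit_of_isIntegral {x : Fin n → ℤ} {D : Submodule ℚ (Fin n → ℚ)} {e : D ≃ₗ[ℚ] D}
    (hD : (D : Set (Fin n → ℚ)) ⊆ DSet V W φ) (hx : embQ n x ∈ D)
    (hrel : ∀ z : D, RelQ V W φ z (e z)) (he : IsIntegral ℤ e.toLinearMap) :
    ∃ p : ℤ, 0 < p ∧ ∃ v : ℕ → Fin n → ℤ, v 0 = p • x ∧ ∀ k, IntRel V W φ (v k) (v (k + 1)) := by
  set f : Module.End ℚ D := e.toLinearMap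
  set z₀ : D := ⟨embQ n x, hx⟩
  set w : ℕ → Fin n → ℚ := fun k => ((f ^ k) z₀ : D)
  have hw : ∀ k, RelQ V W φ (w k) (w (k + 1)) := fun k => by
    convert hrel ((f ^ k) z₀) using 2
    rw [pow_succ', Module.End.mul_apply]
    rfl
  have hΛfg : (span ℤ (range w)).FG := by
    have := (fg_span_range_pow_smul he z₀).map (D.subtype.restrictScalars ℤ)
    rwa [map_span, ← range_comp] at this
  set G := (V ⊓ W).toIntSubmodule.map (embQHom n).toIntLinearMap
  have hΛG : span ℤ (range w) ≤ (span ℚ (G : Set (Fin n → ℚ))).restrictScalars ℤ := by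
    refine span_le.mpr (range_subset_iff.mpr fun k => ?_)
    rw [← qSpan_eq_span_map]
    exact dSet_subset_qSpan (hD ((f ^ k) z₀).2)
  obtain ⟨p, hp, hpG⟩ := exists_pos_zsmul_mem_of_fg hΛfg hΛG
  choose v hvVW hv using fun k => hpG (w k) (subset_span ⟨k, rfl⟩)
  replace hv : ∀ k, embQ n (v k) = p • w k := hv
  refine ⟨p, hp, v, embQ_injective ?_, fun k =>
    intRel_of_relQ (hw k) (hvVW k).1 (hv k) (hv (k + 1))⟩
  rw [hv 0, embQ_zsmul]
  simp [w, z₀]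

end

/-- Proposition 7.1(5): for `x ∈ M`, there is a positive integer `p` such that every
forward iterate `φ^k` is defined at `p • x` (i.e. `p • x ∈ V_k` for all `k`) if and only
if there is a `ℚ`-subspace `D_x ⊆ D_φ` containing the image of `x`, invariant under `φ̃`
(with `φ̃ (D_x) = D_x`), such that the minimal polynomial of the restriction of `φ̃` to
`D_x` is a monic polynomial with integer coefficients. -/
theorem statement5 (n : ℕ) (V W : AddSubgroup (Fin n → ℤ)) (φ : V ≃+ W)
    (x : Fin n → ℤ) :
    (∃ p : ℤ, 0 < p ∧ ∀ k : ℕ, ∃ w, IntRelIter V W φ k (p • x) w) ↔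
      (∃ (D : Submodule ℚ (Fin n → ℚ)) (e : D ≃ₗ[ℚ] D),
        (D : Set (Fin n → ℚ)) ⊆ DSet V W φ ∧ embQ n x ∈ D ∧
        (∀ z : D, RelQ V W φ (z : Fin n → ℚ) ((e z : D) : Fin n → ℚ)) ∧
        ∃ P : Polynomial ℤ, P.Monic ∧
          P.map (Int.castRingHom ℚ) = minpoly ℚ (e.toLinearMap : Module.End ℚ D)) := by
  simp only [forall_exists_intRelIter_iff, ← algebraMap_int_eq,
    ← isIntegral_iff_exists_monic_map_eq_minpoly]
  constructor
  · rintro ⟨p, hp, v, hv0, hv⟩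
    exact exists_integral_subspace_of_orbit hp.ne' hv0 hv
  · rintro ⟨D, e, hD, hx, hrel, he⟩
    exact exists_orbit_of_isIntegral hD hx hrel he
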